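/- Let M ∈ ℕ, let 𝒢 = (G_1, …, G_G) be a partition of Fin M into G nonempty pairwise disjoint groups whose union is Fin M, and let v : Finset (Fin M) → ℝ be separable over 𝒢 with component functions w_1, …, w_G. Then for every i = 1, …, G, the post-grouped Shapley value of group G_i satisfies ∑_{j ∈ G_i} φ_j(v) = w_i(G_i) − w_i(∅). (First equality of Theorem 2.2.) -/

import Mathlib

/-!
For `j ∈ G i`, separability and disjointness make the marginal contributions of `j` to `v` and to
`vᵢ S := w i (S ∩ G i)` equal, so `φ_j(v) = φ_j(vᵢ)`; features outside `G i` are null players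
for `vᵢ`. Hence the group sum is `∑_j φ_j(vᵢ) = vᵢ(univ) - vᵢ(∅)` by efficiency.
Efficiency: writing each `φ_j(v)` as a combination of the values `v T` and summing over `j`, the
coefficient of `v T` is `|T|·ω(|T|-1) - (M-|T|)·ω(|T|)` with `ω(s) = s!(M-s-1)!/M!`; both products
equal `1/C(M,|T|)`, except that the first vanishes for `T = ∅` and the second for `T = univ`.
-/

open Finset

/-- The feature-wise Shapley value of feature `j` for contribution function `v`. -/
noncomputable def shapley {M : ℕ} (v : Finset (Fin M) → ℝ) (j : Fin M) : ℝ :=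
  ∑ S ∈ (Finset.univ.erase j).powerset,
    ((S.card.factorial * (M - S.card - 1).factorial : ℕ) : ℝ) / (M.factorial : ℕ) *
      (v (insert j S) - v S)

open scoped Nat

noncomputable def shapleyWeight (M s : ℕ) : ℝ :=
  ((s ! * (M - s - 1)! : ℕ) : ℝ) / (M ! : ℕ)

lemma sum_ite_mem_const {α β : Type*} [Fintype α] [DecidableEq α] [AddCommMonoid β]
    (T : Finset α) (a b : β) : ∑ j, (if j ∈ T then a else b) = #T • a + #Tᶜ • b := by
  rw [sum_ite, filter_mem_eq_inter, univ_inter, filter_notMem_eq_sdiff, ← compl_eq_univ_sdiff,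
    sum_const, sum_const]

lemma natCast_mul_shapleyWeight_pred {M t : ℕ} (ht : t ≤ M) :
    (t : ℝ) * shapleyWeight M (t - 1) = ((M.choose t : ℕ) : ℝ)⁻¹ - if t = 0 then 1 else 0 := by
  rcases Nat.eq_zero_or_pos t with rfl | ht0
  · simp
  rw [if_neg ht0.ne', sub_zero, Nat.cast_choose ℝ ht, inv_div, shapleyWeight,
    show M - (t - 1) - 1 = M - t by omega, ← Nat.mul_factorial_pred ht0.ne']
  push_cast
  field_simp

lemma natCast_sub_mul_shapleyWeight {M t : ℕ} (ht : t ≤ M) :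
    ((M - t : ℕ) : ℝ) * shapleyWeight M t = ((M.choose t : ℕ) : ℝ)⁻¹ - if t = M then 1 else 0 := by
  rcases ht.eq_or_lt with rfl | htM
  · simp
  rw [if_neg htM.ne, sub_zero, Nat.cast_choose ℝ ht, inv_div, shapleyWeight,
    ← Nat.mul_factorial_pred (Nat.sub_pos_of_lt htM).ne', Nat.sub_right_comm]
  push_cast
  field_simp

lemma shapley_eq_sum_mul {M : ℕ} (v : Finset (Fin M) → ℝ) (j : Fin M) :
    shapley v j = ∑ T, (if j ∈ T then shapleyWeight M (#T - 1) else -shapleyWeight M #T) * v T := by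
  have hj : j ∉ univ.erase j := notMem_erase j _
  rw [shapley, ← powerset_univ]
  conv_rhs => rw [← insert_erase (mem_univ j), sum_powerset_insert hj, ← sum_add_distrib]
  refine sum_congr rfl fun S hS => ?_
  have hjS : j ∉ S := fun h => hj (mem_powerset.1 hS h)
  rw [if_neg hjS, if_pos (mem_insert_self j S), card_insert_of_notMem hjS, Nat.add_sub_cancel,
    shapleyWeight]
  ring

theorem sum_shapley {M : ℕ} (v : Finset (Fin M) → ℝ) :
    ∑ j, shapley v j = v univ - v ∅ := by
  have hcoef : ∀ T : Finset (Fin M),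
      ∑ j, (if j ∈ T then shapleyWeight M (#T - 1) else -shapleyWeight M #T)
        = (if T = univ then 1 else 0) - (if T = ∅ then 1 else 0) := by
    intro T
    have hT : #T ≤ M := by simpa using T.card_le_univ
    rw [sum_ite_mem_const, nsmul_eq_mul, nsmul_eq_mul, card_compl, Fintype.card_fin, mul_neg,
      ← sub_eq_add_neg, natCast_mul_shapleyWeight_pred hT, natCast_sub_mul_shapleyWeight hT]
    have hM : #T = M ↔ T = univ := by simpa using card_eq_iff_eq_univ T
    simp only [card_eq_zero, hM]
    ring
  simp_rw [shapley_eq_sum_mul v]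
  rw [sum_comm]
  simp_rw [← sum_mul, hcoef, sub_mul, sum_sub_distrib, ite_mul, one_mul, zero_mul,
    sum_ite_eq', mem_univ, if_true]

lemma shapley_congr {M : ℕ} {v v' : Finset (Fin M) → ℝ} {j : Fin M}
    (h : ∀ S, j ∉ S → v (insert j S) - v S = v' (insert j S) - v' S) :
    shapley v j = shapley v' j :=
  sum_congr rfl fun S hS => by
    rw [h S fun hj => notMem_erase j univ (mem_powerset.1 hS hj)]

lemma shapley_eq_zero_of_insert_eq {M : ℕ} {v : Finset (Fin M) → ℝ} {j : Fin M}
    (h : ∀ S, v (insert j S) = v S) : shapley v j = 0 :=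
  sum_eq_zero fun S _ => by rw [h, sub_self, mul_zero]

lemma sum_insert_inter_sub_sum_inter {α ι β : Type*} [DecidableEq α] [Fintype ι] [AddCommGroup β]
    (G : ι → Finset α) (w : ι → Finset α → β) {i : ι} {j : α} (hj : ∀ k ≠ i, j ∉ G k)
    (S : Finset α) :
    ∑ k, w k (insert j S ∩ G k) - ∑ k, w k (S ∩ G k) = w i (insert j S ∩ G i) - w i (S ∩ G i) := by
  rw [← sum_sub_distrib, Fintype.sum_eq_single i]
  intro k hk
  rw [insert_inter_of_notMem (hj k hk), sub_self]

theorem postgrouped_shapley_eq_general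
    (M Gn : ℕ) (G : Fin Gn → Finset (Fin M))
    (hdisj : ∀ i j : Fin Gn, i ≠ j → Disjoint (G i) (G j))
    (v : Finset (Fin M) → ℝ) (w : Fin Gn → Finset (Fin M) → ℝ)
    (hsep : ∀ S : Finset (Fin M), v S = ∑ i, w i (S ∩ G i))
    (i : Fin Gn) :
    ∑ j ∈ G i, shapley v j = w i (G i) - w i ∅ := by
  set vi : Finset (Fin M) → ℝ := fun S => w i (S ∩ G i)
  have h_in : ∀ j ∈ G i, shapley v j = shapley vi j := fun j hj =>
    shapley_congr fun S _ => by
      rw [hsep, hsep]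
      exact sum_insert_inter_sub_sum_inter G w
        (fun k hk hjk => disjoint_left.1 (hdisj i k (Ne.symm hk)) hj hjk) S
  have h_out : ∀ j ∉ G i, shapley vi j = 0 := fun j hj =>
    shapley_eq_zero_of_insert_eq fun S => by simp only [vi, insert_inter_of_notMem hj]
  calc ∑ j ∈ G i, shapley v j
      = ∑ j ∈ G i, shapley vi j := sum_congr rfl h_in
    _ = ∑ j, shapley vi j := sum_subset (subset_univ _) fun j _ hj => h_out j hj
    _ = w i (G i) - w i ∅ := by simp only [sum_shapley, vi, univ_inter, empty_inter]

/-- First equality of Theorem 2.2: under separability of `v` over the partition `G` with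
component functions `w`, the post-grouped Shapley value of group `G i` equals
`w i (G i) - w i ∅`. -/
theorem postgrouped_shapley_eq
    (M Gn : ℕ) (G : Fin Gn → Finset (Fin M))
    (hne : ∀ i, (G i).Nonempty)
    (hdisj : ∀ i j : Fin Gn, i ≠ j → Disjoint (G i) (G j))
    (hcover : Finset.univ.biUnion G = (Finset.univ : Finset (Fin M)))
    (v : Finset (Fin M) → ℝ) (w : Fin Gn → Finset (Fin M) → ℝ)
    (hsep : ∀ S : Finset (Fin M), v S = ∑ i, w i (S ∩ G i))
    (i : Fin Gn) :
    ∑ j ∈ G i, shapley v j = w i (G i) - w i ∅ :=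
  postgrouped_shapley_eq_general M Gn G hdisj v w hsep i
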